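/- arXiv:1507.02886 — 3 statements merged into one kernel-verified Lean document; each statement's English description precedes it below -/
import Mathlib

section
/- Let E be a Σ-Mal'tsev category and (f,s) : X ⇄ Y a split epimorphism in Σ. Then there is at most one monoid structure on the object (f,s) in the fibre Pt_Y(E) of points over Y, and when such a structure exists it is necessarily commutative. -/
open CategoryTheory CategoryTheory.Limits

universe v u

variable {C : Type u} [Category.{v} C]

/-- A pair of morphisms with common codomain is jointly extremally epic if any monomorphism
through which both factor is an isomorphism. -/
def JointlyExtremallyEpic {A B Z : C} (a : A ⟶ Z) (b : B ⟶ Z) : Prop :=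
  ∀ ⦃M : C⦄ (m : M ⟶ Z), Mono m → ∀ (a' : A ⟶ M) (b' : B ⟶ M),
    a' ≫ m = a → b' ≫ m = b → IsIso m

/-- A class of split epimorphisms (with chosen splittings). -/
abbrev SigClass (C : Type u) [Category.{v} C] : Type _ :=
  ∀ ⦃X Y : C⦄, (X ⟶ Y) → (Y ⟶ X) → Prop

/-- The class is fibrational: stable under pullback and containing the isomorphisms. -/
def Fibrational (Sig : SigClass C) : Prop :=
  (∀ ⦃X Y X' Y' : C⦄ (f : X ⟶ Y) (s : Y ⟶ X) (f' : X' ⟶ Y') (s' : Y' ⟶ X')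
      (g : Y' ⟶ Y) (gbar : X' ⟶ X),
      IsPullback gbar f' f g → s ≫ f = 𝟙 Y → s' ≫ f' = 𝟙 Y' → s' ≫ gbar = g ≫ s →
      Sig f s → Sig f' s') ∧
  (∀ ⦃X Y : C⦄ (f : X ⟶ Y) (s : Y ⟶ X), IsIso f → s ≫ f = 𝟙 Y → Sig f s)

/-- `C` is a `Σ`-Mal'tsev category: in any pullback of a split epimorphism `(f,s)` of the
class along a split epimorphism `(g,t)`, the pair of induced sections is jointly extremally
epic. -/
def SigmaMaltsev (Sig : SigClass C) : Prop :=
  ∀ ⦃X Y X' Y' : C⦄ (f : X ⟶ Y) (s : Y ⟶ X) (f' : X' ⟶ Y') (s' : Y' ⟶ X')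
    (g : Y' ⟶ Y) (t : Y ⟶ Y') (gbar : X' ⟶ X) (tbar : X ⟶ X'),
    s ≫ f = 𝟙 Y → s' ≫ f' = 𝟙 Y' → t ≫ g = 𝟙 Y → tbar ≫ gbar = 𝟙 X →
    IsPullback gbar f' f g → s' ≫ gbar = g ≫ s → tbar ≫ f' = f ≫ t →
    Sig f s → JointlyExtremallyEpic s' tbar

/-- An internal reflexive relation on `X`. -/
structure ReflRel (X : C) where
  R : C
  d0 : R ⟶ X
  d1 : R ⟶ X
  s0 : X ⟶ R
  jm : ∀ ⦃Z : C⦄ (a b : Z ⟶ R), a ≫ d0 = b ≫ d0 → a ≫ d1 = b ≫ d1 → a = b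
  r0 : s0 ≫ d0 = 𝟙 X
  r1 : s0 ≫ d1 = 𝟙 X

def ReflRel.Symm {X : C} (R : ReflRel X) : Prop :=
  ∃ σ : R.R ⟶ R.R, σ ≫ R.d0 = R.d1 ∧ σ ≫ R.d1 = R.d0

def ReflRel.Trans [HasPullbacks C] {X : C} (R : ReflRel X) : Prop :=
  ∃ t : pullback R.d1 R.d0 ⟶ R.R,
    t ≫ R.d0 = pullback.fst R.d1 R.d0 ≫ R.d0 ∧
    t ≫ R.d1 = pullback.snd R.d1 R.d0 ≫ R.d1

def ReflRel.IsEquiv [HasPullbacks C] {X : C} (R : ReflRel X) : Prop :=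
  R.Symm ∧ R.Trans

/-- A connector for a pair of reflexive relations, satisfying the Mal'tsev identities
`p(xRxSy) = y` and `p(xRySy) = x`. -/
def IsConnector [HasPullbacks C] {X : C} (R S : ReflRel X) (p : pullback R.d1 S.d0 ⟶ X) : Prop :=
  pullback.lift (S.d0 ≫ R.s0) (𝟙 S.R) (by simp [R.r1]) ≫ p = S.d1 ∧
  pullback.lift (𝟙 R.R) (R.d1 ≫ S.s0) (by simp [S.r0]) ≫ p = R.d0

/-- `[R,S] = 0` : the pair of reflexive relations admits a connector. -/
def Centralize [HasPullbacks C] {X : C} (R S : ReflRel X) : Prop :=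
  ∃ p, IsConnector R S p

/-- The kernel relation of a morphism. -/
noncomputable def kerRel [HasPullbacks C] {A B : C} (f : A ⟶ B) : ReflRel A where
  R := pullback f f
  d0 := pullback.fst f f
  d1 := pullback.snd f f
  s0 := pullback.lift (𝟙 A) (𝟙 A) rfl
  jm := fun _ a b h0 h1 => pullback.hom_ext h0 h1
  r0 := pullback.lift_fst _ _ _
  r1 := pullback.lift_snd _ _ _
/-- An internal monoid structure on the point `(f,s)` in the fibre `Pt_Y(C)`:
a composition `m` over `Y` on `X ×_Y X`, unital for the two canonical sections and
associative. -/
def MonoidStr [HasPullbacks C] {X Y : C} (f : X ⟶ Y) (s : Y ⟶ X) (hs : s ≫ f = 𝟙 Y)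
    (m : pullback f f ⟶ X) : Prop :=
  m ≫ f = pullback.fst f f ≫ f ∧
  pullback.lift (f ≫ s) (𝟙 X) (by simp [hs]) ≫ m = 𝟙 X ∧
  pullback.lift (𝟙 X) (f ≫ s) (by simp [hs]) ≫ m = 𝟙 X ∧
  ∀ ⦃Z : C⦄ (a b c : Z ⟶ X) (hab : a ≫ f = b ≫ f) (hbc : b ≫ f = c ≫ f)
    (w1 : (pullback.lift a b hab ≫ m) ≫ f = c ≫ f)
    (w2 : a ≫ f = (pullback.lift b c hbc ≫ m) ≫ f),
    pullback.lift _ c w1 ≫ m = pullback.lift a _ w2 ≫ m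

/-!
The two sections `x ↦ (s f x, x)` and `x ↦ (x, s f x)` of the kernel pair `X ×_Y X` of `f` are
exactly the pair of induced sections in the pullback of `(f, s)` along itself, so the `Σ`-Mal'tsev
condition makes them jointly extremally epic; hence a map out of `X ×_Y X` is determined by its
two restrictions. The unit laws fix both restrictions of a multiplication to be `𝟙 X`, giving
uniqueness, and the twisted multiplication `(x, y) ↦ m (y, x)` is again unital, giving
commutativity.
-/

theorem JointlyExtremallyEpic.hom_ext [HasEqualizers C] {A B Z W : C} {a : A ⟶ Z} {b : B ⟶ Z}
    (h : JointlyExtremallyEpic a b) {u v : Z ⟶ W}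
    (ha : a ≫ u = a ≫ v) (hb : b ≫ u = b ≫ v) : u = v := by
  have : IsIso (equalizer.ι u v) :=
    h (equalizer.ι u v) inferInstance (equalizer.lift a ha) (equalizer.lift b hb)
      (equalizer.lift_ι _ _) (equalizer.lift_ι _ _)
  exact (cancel_epi (equalizer.ι u v)).mp (equalizer.condition u v)

section KernelPair

variable [HasPullbacks C] {X Y : C} {Sig : SigClass C}

noncomputable def unitLeft (f : X ⟶ Y) (s : Y ⟶ X) (hs : s ≫ f = 𝟙 Y) : X ⟶ pullback f f :=
  pullback.lift (f ≫ s) (𝟙 X) (by simp [hs])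

noncomputable def unitRight (f : X ⟶ Y) (s : Y ⟶ X) (hs : s ≫ f = 𝟙 Y) : X ⟶ pullback f f :=
  pullback.lift (𝟙 X) (f ≫ s) (by simp [hs])

noncomputable def kernelPairSwap (f : X ⟶ Y) : pullback f f ⟶ pullback f f :=
  pullback.lift (pullback.snd f f) (pullback.fst f f) pullback.condition.symm

theorem unitLeft_comp_kernelPairSwap (f : X ⟶ Y) (s : Y ⟶ X) (hs : s ≫ f = 𝟙 Y) :
    unitLeft f s hs ≫ kernelPairSwap f = unitRight f s hs := by
  apply pullback.hom_ext <;>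
    simp only [unitLeft, unitRight, kernelPairSwap, Category.assoc, pullback.lift_fst,
      pullback.lift_snd]

theorem unitRight_comp_kernelPairSwap (f : X ⟶ Y) (s : Y ⟶ X) (hs : s ≫ f = 𝟙 Y) :
    unitRight f s hs ≫ kernelPairSwap f = unitLeft f s hs := by
  apply pullback.hom_ext <;>
    simp only [unitLeft, unitRight, kernelPairSwap, Category.assoc, pullback.lift_fst,
      pullback.lift_snd]

theorem SigmaMaltsev.jointlyExtremallyEpic_unitLeft_unitRight (hmal : SigmaMaltsev Sig)
    (f : X ⟶ Y) (s : Y ⟶ X) (hs : s ≫ f = 𝟙 Y) (hSig : Sig f s) :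
    JointlyExtremallyEpic (unitLeft f s hs) (unitRight f s hs) :=
  hmal f s (pullback.snd f f) (unitLeft f s hs) f s (pullback.fst f f) (unitRight f s hs) hs
    (pullback.lift_snd _ _ _) hs (pullback.lift_fst _ _ _) (IsPullback.of_hasPullback f f)
    (pullback.lift_fst _ _ _) (pullback.lift_snd _ _ _) hSig

theorem SigmaMaltsev.kernelPair_hom_ext [HasEqualizers C] (hmal : SigmaMaltsev Sig)
    {f : X ⟶ Y} {s : Y ⟶ X} {hs : s ≫ f = 𝟙 Y} (hSig : Sig f s) {W : C} {u v : pullback f f ⟶ W}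
    (hl : unitLeft f s hs ≫ u = unitLeft f s hs ≫ v)
    (hr : unitRight f s hs ≫ u = unitRight f s hs ≫ v) : u = v :=
  (hmal.jointlyExtremallyEpic_unitLeft_unitRight f s hs hSig).hom_ext hl hr

def IsUnital (f : X ⟶ Y) (s : Y ⟶ X) (hs : s ≫ f = 𝟙 Y) (m : pullback f f ⟶ X) : Prop :=
  unitLeft f s hs ≫ m = 𝟙 X ∧ unitRight f s hs ≫ m = 𝟙 X

theorem MonoidStr.isUnital {f : X ⟶ Y} {s : Y ⟶ X} {hs : s ≫ f = 𝟙 Y} {m : pullback f f ⟶ X}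
    (hm : MonoidStr f s hs m) : IsUnital f s hs m :=
  ⟨hm.2.1, hm.2.2.1⟩

theorem IsUnital.kernelPairSwap_comp {f : X ⟶ Y} {s : Y ⟶ X} {hs : s ≫ f = 𝟙 Y}
    {m : pullback f f ⟶ X} (hm : IsUnital f s hs m) : IsUnital f s hs (kernelPairSwap f ≫ m) := by
  constructor
  · rw [← Category.assoc, unitLeft_comp_kernelPairSwap, hm.2]
  · rw [← Category.assoc, unitRight_comp_kernelPairSwap, hm.1]

variable [HasEqualizers C]

theorem SigmaMaltsev.isUnital_unique (hmal : SigmaMaltsev Sig) {f : X ⟶ Y} {s : Y ⟶ X}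
    {hs : s ≫ f = 𝟙 Y} (hSig : Sig f s) {m m' : pullback f f ⟶ X}
    (hm : IsUnital f s hs m) (hm' : IsUnital f s hs m') : m = m' :=
  hmal.kernelPair_hom_ext hSig (hm.1.trans hm'.1.symm) (hm.2.trans hm'.2.symm)

theorem SigmaMaltsev.kernelPairSwap_comp_of_isUnital (hmal : SigmaMaltsev Sig) {f : X ⟶ Y}
    {s : Y ⟶ X} {hs : s ≫ f = 𝟙 Y} (hSig : Sig f s) {m : pullback f f ⟶ X}
    (hm : IsUnital f s hs m) : kernelPairSwap f ≫ m = m :=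
  hmal.isUnital_unique hSig hm.kernelPairSwap_comp hm

end KernelPair

theorem at_most_one_monoid_structure_general [HasFiniteLimits C] (Sig : SigClass C)
    (hmal : SigmaMaltsev Sig)
    {X Y : C} (f : X ⟶ Y) (s : Y ⟶ X) (hs : s ≫ f = 𝟙 Y) (hSig : Sig f s) :
    (∀ m m' : pullback f f ⟶ X, MonoidStr f s hs m → MonoidStr f s hs m' → m = m') ∧
    (∀ m : pullback f f ⟶ X, MonoidStr f s hs m →
      pullback.lift (pullback.snd f f) (pullback.fst f f) pullback.condition.symm ≫ m = m) :=
  ⟨fun _ _ hm hm' => hmal.isUnital_unique hSig hm.isUnital hm'.isUnital,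
    fun _ hm => hmal.kernelPairSwap_comp_of_isUnital hSig hm.isUnital⟩

/-- In a `Σ`-Mal'tsev category, a split epimorphism in `Σ` carries at most one monoid
structure in the fibre of points, and such a structure is necessarily commutative. -/
theorem at_most_one_monoid_structure [HasFiniteLimits C] (Sig : SigClass C)
    (hfib : Fibrational Sig) (hmal : SigmaMaltsev Sig)
    {X Y : C} (f : X ⟶ Y) (s : Y ⟶ X) (hs : s ≫ f = 𝟙 Y) (hSig : Sig f s) :
    (∀ m m' : pullback f f ⟶ X, MonoidStr f s hs m → MonoidStr f s hs m' → m = m') ∧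
    (∀ m : pullback f f ⟶ X, MonoidStr f s hs m →
      pullback.lift (pullback.snd f f) (pullback.fst f f) pullback.condition.symm ≫ m = m) :=
  at_most_one_monoid_structure_general Sig hmal f s hs hSig
end

section
/- Let E be a Σ-Mal'tsev category. If a reflexive relation R and a Σ-relation S on X centralize each other with connector p, then the coherence conditions hold: for all x R y S z, one has x S p(x R y S z) and p(x R y S z) R z. -/
open CategoryTheory CategoryTheory.Limits

universe v u

variable {C : Type u} [Category.{v} C]

/-! The two sections of `R ×_X S` are jointly extremally epic, by the `Σ`-Mal'tsev property
applied to the pullback of the `Σ`-split epimorphism `(d₀^S, s₀^S)` along `(d₁^R, s₀^R)`.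
Since a relation is a monomorphism into `X × X`, a pair of maps out of `R ×_X S` is related
as soon as its restrictions to both sections are; for the two coherence conditions these
restrictions are, thanks to the connector identities, either a diagonal pair or the pair
`(d₀, d₁)` of the relation itself. -/

theorem JointlyExtremallyEpic.exists_lift [HasPullbacks C] {A B Z Y M : C} {a : A ⟶ Z}
    {b : B ⟶ Z} (hab : JointlyExtremallyEpic a b) (m : M ⟶ Y) [Mono m] (q : Z ⟶ Y)
    (ha : ∃ k : A ⟶ M, k ≫ m = a ≫ q) (hb : ∃ k : B ⟶ M, k ≫ m = b ≫ q) :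
    ∃ h : Z ⟶ M, h ≫ m = q := by
  obtain ⟨ka, hka⟩ := ha
  obtain ⟨kb, hkb⟩ := hb
  have : IsIso (pullback.fst q m) :=
    hab _ inferInstance (pullback.lift a ka hka.symm) (pullback.lift b kb hkb.symm)
      (pullback.lift_fst _ _ _) (pullback.lift_fst _ _ _)
  exact ⟨inv (pullback.fst q m) ≫ pullback.snd q m, by simp [← pullback.condition]⟩

namespace ReflRel

variable {X : C} (R : ReflRel X)

def Relates {Z : C} (u v : Z ⟶ X) : Prop :=
  ∃ h : Z ⟶ R.R, h ≫ R.d0 = u ∧ h ≫ R.d1 = v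

theorem relates_refl {Z : C} (u : Z ⟶ X) : R.Relates u u :=
  ⟨u ≫ R.s0, by simp [R.r0], by simp [R.r1]⟩

theorem relates_d0_d1 : R.Relates R.d0 R.d1 :=
  ⟨𝟙 R.R, Category.id_comp _, Category.id_comp _⟩

theorem mono_prodLift [HasBinaryProducts C] : Mono (prod.lift R.d0 R.d1) :=
  ⟨fun a b h => R.jm a b (by simpa only [prod.comp_lift, prod.lift_fst] using h =≫ prod.fst)
    (by simpa only [prod.comp_lift, prod.lift_snd] using h =≫ prod.snd)⟩

theorem relates_iff_exists_lift [HasBinaryProducts C] {Z : C} (u v : Z ⟶ X) :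
    R.Relates u v ↔ ∃ h : Z ⟶ R.R, h ≫ prod.lift R.d0 R.d1 = prod.lift u v := by
  constructor
  · rintro ⟨h, h0, h1⟩
    exact ⟨h, by ext <;> simp [h0, h1]⟩
  · rintro ⟨h, hh⟩
    exact ⟨h, by simpa only [prod.comp_lift, prod.lift_fst] using hh =≫ prod.fst,
      by simpa only [prod.comp_lift, prod.lift_snd] using hh =≫ prod.snd⟩

end ReflRel

theorem JointlyExtremallyEpic.relates [HasBinaryProducts C] [HasPullbacks C] {A B Z X : C}
    {a : A ⟶ Z} {b : B ⟶ Z} (hab : JointlyExtremallyEpic a b) (R : ReflRel X) {u v : Z ⟶ X}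
    (ha : R.Relates (a ≫ u) (a ≫ v)) (hb : R.Relates (b ≫ u) (b ≫ v)) : R.Relates u v := by
  have := R.mono_prodLift
  rw [R.relates_iff_exists_lift] at ha hb ⊢
  exact hab.exists_lift _ _ (by rwa [prod.comp_lift]) (by rwa [prod.comp_lift])

namespace ReflRel

variable [HasPullbacks C] {X : C} (R S : ReflRel X)

/-- `x R y ↦ x R y S y` -/
noncomputable def pullbackInl : R.R ⟶ pullback R.d1 S.d0 :=
  pullback.lift (𝟙 R.R) (R.d1 ≫ S.s0) (by simp [S.r0])

/-- `y S z ↦ y R y S z` -/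
noncomputable def pullbackInr : S.R ⟶ pullback R.d1 S.d0 :=
  pullback.lift (S.d0 ≫ R.s0) (𝟙 S.R) (by simp [R.r1])

theorem pullbackInl_fst : R.pullbackInl S ≫ pullback.fst _ _ = 𝟙 R.R := pullback.lift_fst _ _ _

theorem pullbackInl_snd : R.pullbackInl S ≫ pullback.snd _ _ = R.d1 ≫ S.s0 :=
  pullback.lift_snd _ _ _

theorem pullbackInr_fst : R.pullbackInr S ≫ pullback.fst _ _ = S.d0 ≫ R.s0 :=
  pullback.lift_fst _ _ _

theorem pullbackInr_snd : R.pullbackInr S ≫ pullback.snd _ _ = 𝟙 S.R := pullback.lift_snd _ _ _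

theorem jointlyExtremallyEpic_pullbackInl_pullbackInr {Sig : SigClass C}
    (hmal : SigmaMaltsev Sig) (hS : Sig S.d0 S.s0) :
    JointlyExtremallyEpic (R.pullbackInl S) (R.pullbackInr S) :=
  hmal S.d0 S.s0 (pullback.fst _ _) (R.pullbackInl S) R.d1 R.s0 (pullback.snd _ _)
    (R.pullbackInr S) S.r0 (pullbackInl_fst R S) R.r1 (pullbackInr_snd R S)
    (IsPullback.of_hasPullback R.d1 S.d0).flip (pullbackInl_snd R S) (pullbackInr_fst R S) hS

end ReflRel

theorem connector_coherence_general [HasFiniteLimits C] (Sig : SigClass C)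
    (hmal : SigmaMaltsev Sig)
    {X : C} (R S : ReflRel X) (hS : Sig S.d0 S.s0)
    (p : pullback R.d1 S.d0 ⟶ X) (hp : IsConnector R S p) :
    (∃ h1 : pullback R.d1 S.d0 ⟶ S.R,
        h1 ≫ S.d0 = pullback.fst R.d1 S.d0 ≫ R.d0 ∧ h1 ≫ S.d1 = p) ∧
    (∃ h2 : pullback R.d1 S.d0 ⟶ R.R,
        h2 ≫ R.d0 = p ∧ h2 ≫ R.d1 = pullback.snd R.d1 S.d0 ≫ S.d1) := by
  have hsections := R.jointlyExtremallyEpic_pullbackInl_pullbackInr S hmal hS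
  have hinr : R.pullbackInr S ≫ p = S.d1 := hp.1
  have hinl : R.pullbackInl S ≫ p = R.d0 := hp.2
  constructor
  · refine hsections.relates S ?_ ?_
    · rw [hinl, ← Category.assoc, ReflRel.pullbackInl_fst, Category.id_comp]
      exact S.relates_refl R.d0
    · rw [hinr, ← Category.assoc, ReflRel.pullbackInr_fst, Category.assoc, R.r0,
        Category.comp_id]
      exact S.relates_d0_d1
  · refine hsections.relates R ?_ ?_
    · rw [hinl, ← Category.assoc, ReflRel.pullbackInl_snd, Category.assoc, S.r1,
        Category.comp_id]
      exact R.relates_d0_d1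
    · rw [hinr, ← Category.assoc, ReflRel.pullbackInr_snd, Category.id_comp]
      exact R.relates_refl S.d1

/-- In a `Σ`-Mal'tsev category, a connector for a reflexive relation `R` and a
`Σ`-relation `S` satisfies the coherence conditions `x S p(xRySz)` and `p(xRySz) R z`. -/
theorem connector_coherence [HasFiniteLimits C] (Sig : SigClass C)
    (hfib : Fibrational Sig) (hmal : SigmaMaltsev Sig)
    {X : C} (R S : ReflRel X) (hS : Sig S.d0 S.s0)
    (p : pullback R.d1 S.d0 ⟶ X) (hp : IsConnector R S p) :
    (∃ h1 : pullback R.d1 S.d0 ⟶ S.R,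
        h1 ≫ S.d0 = pullback.fst R.d1 S.d0 ≫ R.d0 ∧ h1 ≫ S.d1 = p) ∧
    (∃ h2 : pullback R.d1 S.d0 ⟶ R.R,
        h2 ≫ R.d0 = p ∧ h2 ≫ R.d1 = pullback.snd R.d1 S.d0 ≫ S.d1) :=
  connector_coherence_general Sig hmal R S hS p hp
end

section
/- Let E be a point-congruous Σ-Mal'tsev category. Then for every object Y, the full subcategory Σl_Y(E) of the slice category E/Y on the Σ-special morphisms is a Mal'tsev category: every internal reflexive relation in Σl_Y(E) is an equivalence relation. In particular the full subcategory of Σ-special objects of E is a Mal'tsev category (the Mal'tsev core). -/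
open CategoryTheory CategoryTheory.Limits

universe v u

variable {C : Type u} [Category.{v} C]

/-- The category of points (split epimorphisms with chosen splitting) of `C`. -/
structure Pt (C : Type u) [Category.{v} C] where
  dom : C
  cod : C
  p : dom ⟶ cod
  s : cod ⟶ dom
  sp : s ≫ p = 𝟙 cod

@[ext]
structure PtHom (a b : Pt C) where
  dh : a.dom ⟶ b.dom
  ch : a.cod ⟶ b.cod
  wp : dh ≫ b.p = a.p ≫ ch
  ws : a.s ≫ dh = ch ≫ b.s

instance : Category (Pt C) where
  Hom a b := PtHom a b
  id a := ⟨𝟙 a.dom, 𝟙 a.cod, by simp, by simp⟩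
  comp u v := ⟨u.dh ≫ v.dh, u.ch ≫ v.ch,
    by rw [Category.assoc, v.wp, ← Category.assoc, u.wp, Category.assoc],
    by rw [← Category.assoc, u.ws, Category.assoc, v.ws, ← Category.assoc]⟩
  id_comp u := by apply PtHom.ext <;> simp [CategoryStruct.comp, CategoryStruct.id]
  comp_id u := by apply PtHom.ext <;> simp [CategoryStruct.comp, CategoryStruct.id]
  assoc u v w := by apply PtHom.ext <;> simp [CategoryStruct.comp]

/-- The class `Σ` is point-congruous: the full subcategory `Σ(C)` of `Pt(C)` is stable
under finite limits. -/
def PointCongruous (Sig : SigClass C) : Prop :=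
  ∀ (J : Type) (_ : SmallCategory J) (_ : FinCategory J) (F : J ⥤ Pt C),
    (∀ j : J, Sig (F.obj j).p (F.obj j).s) →
    ∀ (c : Cone F), IsLimit c → Sig c.pt.p c.pt.s
/-- A morphism is `Σ`-special when its kernel relation is a `Σ`-relation. -/
def SigSpecial [HasPullbacks C] (Sig : SigClass C) {A B : C} (f : A ⟶ B) : Prop :=
  Sig (kerRel f).d0 (kerRel f).s0

/-!
First, `Σ`-special morphisms cancel on the right: for `g : W ⟶ X` and `f : X ⟶ Y`, the
kernel-pair point of `g` is the pullback in `Pt C` of the kernel-pair point of `g ≫ f` along the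
diagonal `(X ⇄ X) ⟶ R[f]`, so point-congruity makes `g` special when `f` and `g ≫ f` are. Hence
`R.d0` is special.

Second, pull the kernel-pair point of `R.d0` back along that of `R.d1`. An element of the
pullback is a triple `a : x ~ y'`, `r : x ~ y`, `b : x' ~ y`, and on the images of the two
induced sections (where `a = r` or `b = r`) the pair `(x', y')` lies in `R`. These sections are
jointly extremally epic, so `(x', y')` lies in `R` on the whole pullback: `R` is difunctional,
and a reflexive difunctional relation is an equivalence relation.
-/

attribute [local simp] pullback.lift_fst pullback.lift_snd pullback.lift_fst_assoc
  pullback.lift_snd_assoc prod.lift_fst prod.lift_snd prod.lift_fst_assoc prod.lift_snd_assoc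

namespace Pt

@[simp] lemma comp_dh {a b c : Pt C} (u : a ⟶ b) (v : b ⟶ c) : (u ≫ v).dh = u.dh ≫ v.dh := rfl

@[simp] lemma comp_ch {a b c : Pt C} (u : a ⟶ b) (v : b ⟶ c) : (u ≫ v).ch = u.ch ≫ v.ch := rfl

lemma hom_ext {a b : Pt C} {u v : a ⟶ b} (hd : u.dh = v.dh) (hc : u.ch = v.ch) : u = v :=
  PtHom.ext hd hc

abbrev identity (X : C) : Pt C := ⟨X, X, 𝟙 X, 𝟙 X, Category.comp_id _⟩

noncomputable abbrev kernelPair [HasPullbacks C] {A B : C} (f : A ⟶ B) : Pt C :=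
  ⟨pullback f f, A, pullback.fst f f, pullback.diagonal f, pullback.diagonal_fst f⟩

def fromIdentity (p : Pt C) : identity p.cod ⟶ p :=
  ⟨p.s, 𝟙 p.cod, by simp [identity, p.sp], by simp [identity]⟩

def toIdentity (p : Pt C) {X : C} (h : p.cod ⟶ X) : p ⟶ identity X :=
  ⟨p.p ≫ h, h, by simp [identity], by simp [identity, reassoc_of% p.sp]⟩

noncomputable def kernelPairMap [HasPullbacks C] {A B A' B' : C} {f : A ⟶ B} {f' : A' ⟶ B'}
    (u : A ⟶ A') (v : B ⟶ B') (w : f ≫ v = u ≫ f') : kernelPair f ⟶ kernelPair f' :=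
  ⟨pullback.map f f f' f' u u v w w, u, by simp, by apply pullback.hom_ext <;> simp⟩

lemma isPullback_of_components {P A B Q : Pt C} {fst : P ⟶ A} {snd : P ⟶ B} {f : A ⟶ Q}
    {g : B ⟶ Q} (w : fst ≫ f = snd ≫ g) (hdom : IsPullback fst.dh snd.dh f.dh g.dh)
    (hcod : IsPullback fst.ch snd.ch f.ch g.ch) : IsPullback fst snd f g := by
  have wdom (s : PullbackCone f g) : s.fst.dh ≫ f.dh = s.snd.dh ≫ g.dh := by
    simpa using congrArg PtHom.dh s.condition
  have wcod (s : PullbackCone f g) : s.fst.ch ≫ f.ch = s.snd.ch ≫ g.ch := by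
    simpa using congrArg PtHom.ch s.condition
  let lift (s : PullbackCone f g) : s.pt ⟶ P :=
    ⟨hdom.lift _ _ (wdom s), hcod.lift _ _ (wcod s),
      hcod.hom_ext (by simp [← fst.wp, ← s.fst.wp]) (by simp [← snd.wp, ← s.snd.wp]),
      hdom.hom_ext (by simp [fst.ws, s.fst.ws]) (by simp [snd.ws, s.snd.ws])⟩
  refine .of_isLimit
    (PullbackCone.IsLimit.mk w lift (fun s => ?_) (fun s => ?_) (fun s m h₁ h₂ => ?_))
  · exact hom_ext (by simp [lift]) (by simp [lift])
  · exact hom_ext (by simp [lift]) (by simp [lift])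
  · refine hom_ext (hdom.hom_ext ?_ ?_) (hcod.hom_ext ?_ ?_) <;>
      simp [lift, ← h₁, ← h₂]

end Pt

variable {Sig : SigClass C}

lemma PointCongruous.sig_of_isPullback (hpc : PointCongruous Sig) {P A B Q : Pt C}
    {fst : P ⟶ A} {snd : P ⟶ B} {f : A ⟶ Q} {g : B ⟶ Q} (h : IsPullback fst snd f g)
    (hA : Sig A.p A.s) (hB : Sig B.p B.s) (hQ : Sig Q.p Q.s) : Sig P.p P.s :=
  hpc WalkingCospan inferInstance inferInstance (cospan f g)
    (by rintro (_ | _ | _) <;> assumption) h.cone h.isLimit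

lemma SigSpecial.of_comp [HasPullbacks C] (hpc : PointCongruous Sig) {W X Y : C}
    (hid : Sig (𝟙 X) (𝟙 X)) {g : W ⟶ X} {f : X ⟶ Y} (hf : SigSpecial Sig f)
    (hgf : SigSpecial Sig (g ≫ f)) : SigSpecial Sig g := by
  have hdom := (pullback_map_diagonal_isPullback g g f).flip
  have hsq : IsPullback (Pt.kernelPairMap (f := g) (f' := g ≫ f) (𝟙 W) f (by simp))
      (Pt.toIdentity _ g) (Pt.kernelPairMap (f := g ≫ f) (f' := f) g (𝟙 Y) (by simp))
      (Pt.fromIdentity (Pt.kernelPair f)) :=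
    Pt.isPullback_of_components
      (Pt.hom_ext hdom.w (by simp [Pt.toIdentity, Pt.kernelPairMap, Pt.fromIdentity]))
      hdom (IsPullback.id_horiz g)
  exact hpc.sig_of_isPullback hsq hgf hid hf

lemma JointlyExtremallyEpic.exists_lift_of_mono [HasPullbacks C] {A B Z M W : C}
    {a : A ⟶ Z} {b : B ⟶ Z} (h : JointlyExtremallyEpic a b) (m : M ⟶ W) [Mono m] (ψ : Z ⟶ W)
    {a' : A ⟶ M} {b' : B ⟶ M} (ha : a ≫ ψ = a' ≫ m) (hb : b ≫ ψ = b' ≫ m) :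
    ∃ d : Z ⟶ M, d ≫ m = ψ := by
  have := h (pullback.fst ψ m) inferInstance (pullback.lift a a' ha) (pullback.lift b b' hb)
    (by simp) (by simp)
  exact ⟨inv (pullback.fst ψ m) ≫ pullback.snd ψ m, by simp [← pullback.condition]⟩

lemma SigmaMaltsev.jointlyExtremallyEpic_pullback (hmal : SigmaMaltsev Sig) {X Y Y' : C}
    (f : X ⟶ Y) (s : Y ⟶ X) (g : Y' ⟶ Y) (t : Y ⟶ Y') [HasPullback f g] (hs : s ≫ f = 𝟙 Y)
    (ht : t ≫ g = 𝟙 Y) (hf : Sig f s) :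
    JointlyExtremallyEpic (pullback.lift (g ≫ s) (𝟙 Y') (by simp [hs]) : Y' ⟶ pullback f g)
      (pullback.lift (𝟙 X) (f ≫ t) (by simp [ht])) :=
  hmal f s _ _ g t _ _ hs (by simp) ht (by simp) (.of_hasPullback f g) (by simp) (by simp) hf

namespace ReflRel

variable {X : C} (R : ReflRel X)

instance mono_prodLift_s17 [HasBinaryProduct X X] : Mono (prod.lift R.d0 R.d1) :=
  ⟨fun a b h => R.jm a b (by simpa using h =≫ prod.fst) (by simpa using h =≫ prod.snd)⟩

/-- Difunctionality in generalized elements: `r : x ~ y`, `a : x ~ y'` and `b : x' ~ y`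
give some `c : x' ~ y'`. -/
def Difunctional : Prop :=
  ∀ ⦃Z : C⦄ (r a b : Z ⟶ R.R), a ≫ R.d0 = r ≫ R.d0 → b ≫ R.d1 = r ≫ R.d1 →
    ∃ c : Z ⟶ R.R, c ≫ R.d0 = b ≫ R.d0 ∧ c ≫ R.d1 = a ≫ R.d1

variable {R}

lemma Difunctional.isEquiv [HasPullbacks C] (h : R.Difunctional) : R.IsEquiv := by
  constructor
  · obtain ⟨c, hc₀, hc₁⟩ := h (𝟙 R.R) (R.d0 ≫ R.s0) (R.d1 ≫ R.s0) (by simp [R.r0])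
      (by simp [R.r1])
    exact ⟨c, by simpa [R.r0] using hc₀, by simpa [R.r1] using hc₁⟩
  · obtain ⟨c, hc₀, hc₁⟩ := h (pullback.fst R.d1 R.d0 ≫ R.d1 ≫ R.s0) (pullback.snd R.d1 R.d0)
      (pullback.fst R.d1 R.d0) (by simp [R.r0, pullback.condition]) (by simp [R.r1])
    exact ⟨c, hc₀, hc₁⟩

lemma difunctional_of_sigSpecial_d0 [HasFiniteLimits C] (hmal : SigmaMaltsev Sig)
    (hd0 : SigSpecial Sig R.d0) : R.Difunctional := by
  intro Z r a b ha hb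
  let f := pullback.fst R.d0 R.d0
  let g := pullback.fst R.d1 R.d1
  have hJ := hmal.jointlyExtremallyEpic_pullback f (pullback.diagonal R.d0) g
    (pullback.diagonal R.d1) (by simp [f]) (by simp [g]) hd0
  -- `ψ ((r, a), (r, b)) = (b.d0, a.d1)`
  let ψ : pullback f g ⟶ X ⨯ X := prod.lift (pullback.snd f g ≫ pullback.snd _ _ ≫ R.d0)
    (pullback.fst f g ≫ pullback.snd _ _ ≫ R.d1)
  obtain ⟨D, hD⟩ := hJ.exists_lift_of_mono (prod.lift R.d0 R.d1) ψ
    (a' := pullback.snd R.d1 R.d1) (b' := pullback.snd R.d0 R.d0)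
    (by ext <;> simp [ψ, g, pullback.condition]) (by ext <;> simp [ψ, f, pullback.condition])
  let e : Z ⟶ pullback f g :=
    pullback.lift (pullback.lift r a ha.symm) (pullback.lift r b hb.symm) (by simp [f, g])
  exact ⟨e ≫ D, by simpa [ψ, e] using e ≫= hD =≫ prod.fst,
    by simpa [ψ, e] using e ≫= hD =≫ prod.snd⟩

end ReflRel

theorem sigma_special_slice_maltsev_general [HasFiniteLimits C] (Sig : SigClass C)
    (hfib : Fibrational Sig) (hpc : PointCongruous Sig) (hmal : SigmaMaltsev Sig)
    {Y X : C} (gX : X ⟶ Y) (hgX : SigSpecial Sig gX)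
    (R : ReflRel X)
    (hgR : SigSpecial Sig (R.d0 ≫ gX)) :
    R.IsEquiv := by
  have hd0 : SigSpecial Sig R.d0 :=
    SigSpecial.of_comp hpc (hfib.2 (𝟙 X) (𝟙 X) inferInstance (by simp)) hgX hgR
  exact (ReflRel.difunctional_of_sigSpecial_d0 hmal hd0).isEquiv

/-- In a point-congruous `Σ`-Mal'tsev category, each fibre `Σl_Y(C)` of `Σ`-special
morphisms over `Y` is a Mal'tsev category: every reflexive relation in it is an
equivalence relation.  (Taking `Y` terminal, the `Σ`-special objects form a Mal'tsev
category, the Mal'tsev core.) -/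
theorem sigma_special_slice_maltsev [HasFiniteLimits C] (Sig : SigClass C)
    (hfib : Fibrational Sig) (hpc : PointCongruous Sig) (hmal : SigmaMaltsev Sig)
    {Y X : C} (gX : X ⟶ Y) (hgX : SigSpecial Sig gX)
    (R : ReflRel X) (hover : R.d0 ≫ gX = R.d1 ≫ gX)
    (hgR : SigSpecial Sig (R.d0 ≫ gX)) :
    R.IsEquiv :=
  sigma_special_slice_maltsev_general Sig hfib hpc hmal gX hgX R hgR
end
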